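/- Let I ⊆ ℝ be open, let H : ℝ → ℝ be three times differentiable on I, and let G : ℝ → ℝ satisfy G'(t) = H(t) for all t ∈ I. On ℝ⁵ × I with coordinates (x,y,z,p,q,t), define the functions X = −2t, Y = p + tq + (2G(t) − tH(t))x + H(t)y, Z = z − px − qy − ((1/2)t²H'(t) − tH(t) + G(t))x² − (H(t) − tH'(t))xy − (1/2)H'(t)y², P = −(1/2)q − (1/2)(H(t) − tH'(t))x − (1/2)H'(t)y, Q = (1/4)H''(t)(y − tx), L = (1/8)(H'''(t)(tx−y) + H''(t)x), and define the linear functionals on tangent vectors v = (v_x,v_y,v_z,v_p,v_q,v_t): ω₂(v) = v_p + (t²H'(t) − 2tH(t) + 2G(t))v_x + (H(t) − tH'(t))v_y, ω₃(v) = v_q + (H(t) − tH'(t))v_x + H'(t)v_y, ω₄(v) = v_y − t·v_x, ϖ(v) = v_z − p·v_x − q·v_y. Then at every point m = (x,y,z,p,q,t) and for every v: DY(v) − P(m)·DX(v) = ω₂(v) + t·ω₃(v); DP(v) − Q(m)·DX(v) = −(1/2)ω₃(v); DQ(v) − L(m)·DX(v) = (1/4)H''(t)·ω₄(v); and if moreover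 H''(t) ≠ 0, then DZ(v) − (4Q(m)²/H''(t))·DX(v) = ϖ(v) − x·ω₂(v) − y·ω₃(v). Here Df(v) denotes the Fréchet derivative of f at m applied to v. -/

import Mathlib

noncomputable section

/-- Points (and tangent vectors) of the correspondence space `ℝ⁵ × ℝ`, with coordinates
`(x, y, z, p, q, t)`. -/
abbrev R6 : Type := ℝ × ℝ × ℝ × ℝ × ℝ × ℝ

namespace Stmt14

variable (H G : ℝ → ℝ)

/-- The coordinate function `X = −2t`. -/
def Xc (m : R6) : ℝ := -2 * m.2.2.2.2.2
/-- The coordinate function `Y = p + tq + (2G(t) − tH(t))x + H(t)y`. -/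
def Yc (m : R6) : ℝ :=
  m.2.2.2.1 + m.2.2.2.2.2 * m.2.2.2.2.1
    + (2 * G m.2.2.2.2.2 - m.2.2.2.2.2 * H m.2.2.2.2.2) * m.1 + H m.2.2.2.2.2 * m.2.1
/-- The coordinate function
`Z = z − px − qy − ((1/2)t²H'(t) − tH(t) + G(t))x² − (H(t) − tH'(t))xy − (1/2)H'(t)y²`. -/
def Zc (m : R6) : ℝ :=
  m.2.2.1 - m.2.2.2.1 * m.1 - m.2.2.2.2.1 * m.2.1
    - (1 / 2 * m.2.2.2.2.2 ^ 2 * deriv H m.2.2.2.2.2 - m.2.2.2.2.2 * H m.2.2.2.2.2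
        + G m.2.2.2.2.2) * m.1 ^ 2
    - (H m.2.2.2.2.2 - m.2.2.2.2.2 * deriv H m.2.2.2.2.2) * m.1 * m.2.1
    - 1 / 2 * deriv H m.2.2.2.2.2 * m.2.1 ^ 2
/-- The coordinate function `P = −(1/2)q − (1/2)(H(t) − tH'(t))x − (1/2)H'(t)y`. -/
def Pc (m : R6) : ℝ :=
  -(1 / 2) * m.2.2.2.2.1
    - 1 / 2 * (H m.2.2.2.2.2 - m.2.2.2.2.2 * deriv H m.2.2.2.2.2) * m.1
    - 1 / 2 * deriv H m.2.2.2.2.2 * m.2.1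
/-- The coordinate function `Q = (1/4)H''(t)(y − tx)`. -/
def Qc (m : R6) : ℝ :=
  1 / 4 * deriv (deriv H) m.2.2.2.2.2 * (m.2.1 - m.2.2.2.2.2 * m.1)
/-- The fibre coordinate `L = (1/8)(H'''(t)(tx − y) + H''(t)x)`. -/
def Lc (m : R6) : ℝ :=
  1 / 8 * (deriv (deriv (deriv H)) m.2.2.2.2.2 * (m.2.2.2.2.2 * m.1 - m.2.1)
    + deriv (deriv H) m.2.2.2.2.2 * m.1)

/-- The structural 1-form `ω₂ = dp + (t²H' − 2tH + 2G)dx + (H − tH')dy`. -/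
def ω₂ (m v : R6) : ℝ :=
  v.2.2.2.1
    + (m.2.2.2.2.2 ^ 2 * deriv H m.2.2.2.2.2 - 2 * m.2.2.2.2.2 * H m.2.2.2.2.2
        + 2 * G m.2.2.2.2.2) * v.1
    + (H m.2.2.2.2.2 - m.2.2.2.2.2 * deriv H m.2.2.2.2.2) * v.2.1
/-- The structural 1-form `ω₃ = dq + (H − tH')dx + H'dy`. -/
def ω₃ (m v : R6) : ℝ :=
  v.2.2.2.2.1 + (H m.2.2.2.2.2 - m.2.2.2.2.2 * deriv H m.2.2.2.2.2) * v.1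
    + deriv H m.2.2.2.2.2 * v.2.1
/-- The structural 1-form `ω₄ = dy − tdx`. -/
def ω₄ (m v : R6) : ℝ := v.2.1 - m.2.2.2.2.2 * v.1
/-- The contact form `ϖ = dz − pdx − qdy`. -/
def ϖ (m v : R6) : ℝ := v.2.2.1 - m.2.2.2.1 * v.1 - m.2.2.2.2.1 * v.2.1

end Stmt14

/-! Each of `X, Y, Z, P, Q` is a polynomial in `x, y, z, p, q` whose coefficients are functions
of `t` alone, so the chain rule computes its differential in terms of `H, H', H'', H''', G` and
`G' = H`; each identity is then a polynomial identity in these quantities. The only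
non-polynomial step is `4Q²/H'' = H''(y − tx)²/4`, which is where `H'' ≠ 0` enters. -/

namespace Stmt14

def dx : R6 →L[ℝ] ℝ := ContinuousLinearMap.fst ℝ ℝ _
def dy : R6 →L[ℝ] ℝ := (ContinuousLinearMap.fst ℝ ℝ _).comp (ContinuousLinearMap.snd ℝ ℝ _)
def dz : R6 →L[ℝ] ℝ :=
  ((ContinuousLinearMap.fst ℝ ℝ _).comp (ContinuousLinearMap.snd ℝ ℝ _)).comp
    (ContinuousLinearMap.snd ℝ ℝ _)
def dp : R6 →L[ℝ] ℝ :=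
  (((ContinuousLinearMap.fst ℝ ℝ _).comp (ContinuousLinearMap.snd ℝ ℝ _)).comp
    (ContinuousLinearMap.snd ℝ ℝ _)).comp (ContinuousLinearMap.snd ℝ ℝ _)
def dq : R6 →L[ℝ] ℝ :=
  ((((ContinuousLinearMap.fst ℝ ℝ _).comp (ContinuousLinearMap.snd ℝ ℝ _)).comp
    (ContinuousLinearMap.snd ℝ ℝ _)).comp (ContinuousLinearMap.snd ℝ ℝ _)).comp
    (ContinuousLinearMap.snd ℝ ℝ _)
def dt : R6 →L[ℝ] ℝ :=
  ((((ContinuousLinearMap.snd ℝ ℝ ℝ).comp (ContinuousLinearMap.snd ℝ ℝ _)).comp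
    (ContinuousLinearMap.snd ℝ ℝ _)).comp (ContinuousLinearMap.snd ℝ ℝ _)).comp
    (ContinuousLinearMap.snd ℝ ℝ _)

@[simp] lemma dx_apply (v : R6) : dx v = v.1 := rfl
@[simp] lemma dy_apply (v : R6) : dy v = v.2.1 := rfl
@[simp] lemma dz_apply (v : R6) : dz v = v.2.2.1 := rfl
@[simp] lemma dp_apply (v : R6) : dp v = v.2.2.2.1 := rfl
@[simp] lemma dq_apply (v : R6) : dq v = v.2.2.2.2.1 := rfl
@[simp] lemma dt_apply (v : R6) : dt v = v.2.2.2.2.2 := rfl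

variable {H G : ℝ → ℝ} {m : R6}

lemma hasFDerivAt_comp_t {f : ℝ → ℝ} {f' : ℝ} (hf : HasDerivAt f f' m.2.2.2.2.2) :
    HasFDerivAt (fun m : R6 => f m.2.2.2.2.2) (f' • dt) m :=
  hf.comp_hasFDerivAt m dt.hasFDerivAt

lemma fderiv_Xc_apply (v : R6) : fderiv ℝ Xc m v = -2 * v.2.2.2.2.2 := by
  have hX : HasFDerivAt Xc _ m := dt.hasFDerivAt.const_mul (-2)
  simp [hX.fderiv]

lemma fderiv_Yc_sub_Pc_mul_fderiv_Xc (hH : DifferentiableAt ℝ H m.2.2.2.2.2)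
    (hG : HasDerivAt G (H m.2.2.2.2.2) m.2.2.2.2.2) (v : R6) :
    fderiv ℝ (Yc H G) m v - Pc H m * fderiv ℝ Xc m v = ω₂ H G m v + m.2.2.2.2.2 * ω₃ H m v := by
  have hcoef := (hG.const_mul 2).sub ((hasDerivAt_id _).mul hH.hasDerivAt)
  have hY : HasFDerivAt (Yc H G) _ m :=
    ((dp.hasFDerivAt.add (dt.hasFDerivAt.mul dq.hasFDerivAt)).add
      ((hasFDerivAt_comp_t hcoef).mul dx.hasFDerivAt)).add
      ((hasFDerivAt_comp_t hH.hasDerivAt).mul dy.hasFDerivAt)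
  rw [hY.fderiv, fderiv_Xc_apply]
  simp only [add_apply, smul_apply, smul_eq_mul, dx_apply, dy_apply, dp_apply, dq_apply, dt_apply,
    Pi.sub_apply, Pi.mul_apply, id_eq, Pc, ω₂, ω₃]
  ring

lemma fderiv_Pc_sub_Qc_mul_fderiv_Xc (hH : DifferentiableAt ℝ H m.2.2.2.2.2)
    (hH' : DifferentiableAt ℝ (deriv H) m.2.2.2.2.2) (v : R6) :
    fderiv ℝ (Pc H) m v - Qc H m * fderiv ℝ Xc m v = -(1 / 2) * ω₃ H m v := by
  have hcoef := (hH.hasDerivAt.sub ((hasDerivAt_id _).mul hH'.hasDerivAt)).const_mul (1 / 2)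
  have hP : HasFDerivAt (Pc H) _ m :=
    ((dq.hasFDerivAt.const_mul (-(1 / 2))).sub
      ((hasFDerivAt_comp_t hcoef).mul dx.hasFDerivAt)).sub
      ((hasFDerivAt_comp_t (hH'.hasDerivAt.const_mul (1 / 2))).mul dy.hasFDerivAt)
  rw [hP.fderiv, fderiv_Xc_apply]
  simp only [add_apply, sub_apply, smul_apply, smul_eq_mul, dx_apply, dy_apply, dq_apply, dt_apply,
    Pi.sub_apply, Pi.mul_apply, id_eq, Qc, ω₃]
  ring

lemma fderiv_Qc_sub_Lc_mul_fderiv_Xc (hH'' : DifferentiableAt ℝ (deriv (deriv H)) m.2.2.2.2.2)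
    (v : R6) :
    fderiv ℝ (Qc H) m v - Lc H m * fderiv ℝ Xc m v
      = 1 / 4 * deriv (deriv H) m.2.2.2.2.2 * ω₄ m v := by
  have hQ : HasFDerivAt (Qc H) _ m :=
    (hasFDerivAt_comp_t (hH''.hasDerivAt.const_mul (1 / 4))).mul
      (dy.hasFDerivAt.sub (dt.hasFDerivAt.mul dx.hasFDerivAt))
  rw [hQ.fderiv, fderiv_Xc_apply]
  simp only [add_apply, sub_apply, smul_apply, smul_eq_mul, dx_apply, dy_apply, dt_apply, Lc, ω₄]
  ring

/-- `H''(t) (y − tx)² / 4` is `4Q²/H''` with `H''` cancelled. -/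
lemma fderiv_Zc_sub_mul_fderiv_Xc (hH : DifferentiableAt ℝ H m.2.2.2.2.2)
    (hH' : DifferentiableAt ℝ (deriv H) m.2.2.2.2.2)
    (hG : HasDerivAt G (H m.2.2.2.2.2) m.2.2.2.2.2) (v : R6) :
    fderiv ℝ (Zc H G) m v
        - 1 / 4 * deriv (deriv H) m.2.2.2.2.2 * (m.2.1 - m.2.2.2.2.2 * m.1) ^ 2 * fderiv ℝ Xc m v
      = ϖ m v - m.1 * ω₂ H G m v - m.2.1 * ω₃ H m v := by
  have hcoef_xx := ((((hasDerivAt_pow 2 _).const_mul (1 / 2)).mul hH'.hasDerivAt).sub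
    ((hasDerivAt_id _).mul hH.hasDerivAt)).add hG
  have hcoef_xy := hH.hasDerivAt.sub ((hasDerivAt_id _).mul hH'.hasDerivAt)
  have hZ : HasFDerivAt (Zc H G) _ m :=
    (((((dz.hasFDerivAt.sub (dp.hasFDerivAt.mul dx.hasFDerivAt)).sub
      (dq.hasFDerivAt.mul dy.hasFDerivAt)).sub
      ((hasFDerivAt_comp_t hcoef_xx).mul (dx.hasFDerivAt.pow 2))).sub
      (((hasFDerivAt_comp_t hcoef_xy).mul dx.hasFDerivAt).mul dy.hasFDerivAt)).sub
      ((hasFDerivAt_comp_t (hH'.hasDerivAt.const_mul (1 / 2))).mul (dy.hasFDerivAt.pow 2)))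
  rw [hZ.fderiv, fderiv_Xc_apply]
  simp only [add_apply, sub_apply, smul_apply, smul_eq_mul, nsmul_eq_mul, dx_apply, dy_apply,
    dz_apply, dp_apply, dq_apply, dt_apply, Pi.add_apply, Pi.sub_apply, Pi.mul_apply, id_eq,
    ϖ, ω₂, ω₃]
  ring

lemma four_mul_Qc_sq_div (hH'' : deriv (deriv H) m.2.2.2.2.2 ≠ 0) :
    4 * Qc H m ^ 2 / deriv (deriv H) m.2.2.2.2.2
      = 1 / 4 * deriv (deriv H) m.2.2.2.2.2 * (m.2.1 - m.2.2.2.2.2 * m.1) ^ 2 := by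
  rw [Qc, div_eq_iff hH'']
  ring

end Stmt14

open Stmt14

theorem double_fibration_transform_general
    (I : Set ℝ) (H G : ℝ → ℝ)
    (hH0 : ∀ t ∈ I, DifferentiableAt ℝ H t)
    (hH1 : ∀ t ∈ I, DifferentiableAt ℝ (deriv H) t)
    (hH2 : ∀ t ∈ I, DifferentiableAt ℝ (deriv (deriv H)) t)
    (hG : ∀ t ∈ I, HasDerivAt G (H t) t) :
    ∀ m : R6, m.2.2.2.2.2 ∈ I → ∀ v : R6,
      (fderiv ℝ (Yc H G) m v - Pc H m * fderiv ℝ Xc m v = ω₂ H G m v + m.2.2.2.2.2 * ω₃ H m v)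
      ∧ (fderiv ℝ (Pc H) m v - Qc H m * fderiv ℝ Xc m v = -(1 / 2) * ω₃ H m v)
      ∧ (fderiv ℝ (Qc H) m v - Lc H m * fderiv ℝ Xc m v
          = 1 / 4 * deriv (deriv H) m.2.2.2.2.2 * ω₄ m v)
      ∧ (deriv (deriv H) m.2.2.2.2.2 ≠ 0 →
          fderiv ℝ (Zc H G) m v
              - (4 * Qc H m ^ 2 / deriv (deriv H) m.2.2.2.2.2) * fderiv ℝ Xc m v
            = ϖ m v - m.1 * ω₂ H G m v - m.2.1 * ω₃ H m v) := by
  intro m hm v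
  refine ⟨fderiv_Yc_sub_Pc_mul_fderiv_Xc (hH0 _ hm) (hG _ hm) v,
    fderiv_Pc_sub_Qc_mul_fderiv_Xc (hH0 _ hm) (hH1 _ hm) v,
    fderiv_Qc_sub_Lc_mul_fderiv_Xc (hH2 _ hm) v, fun hH'' => ?_⟩
  rw [four_mul_Qc_sq_div hH'']
  exact fderiv_Zc_sub_mul_fderiv_Xc (hH0 _ hm) (hH1 _ hm) (hG _ hm) v

/-- The double fibration transform: the differentials of the coordinate functions
`(X, Y, Z, P, Q, L)` on the correspondence space satisfy
`dY − PdX = ω₂ + tω₃`, `dP − QdX = −(1/2)ω₃`, `dQ − LdX = (1/4)H''·ω₄` and, where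
`H'' ≠ 0`, `dZ − (4Q²/H'')dX = ϖ − xω₂ − yω₃`. -/
theorem double_fibration_transform
    (I : Set ℝ) (hI : IsOpen I) (H G : ℝ → ℝ)
    (hH0 : ∀ t ∈ I, DifferentiableAt ℝ H t)
    (hH1 : ∀ t ∈ I, DifferentiableAt ℝ (deriv H) t)
    (hH2 : ∀ t ∈ I, DifferentiableAt ℝ (deriv (deriv H)) t)
    (hG : ∀ t ∈ I, HasDerivAt G (H t) t) :
    ∀ m : R6, m.2.2.2.2.2 ∈ I → ∀ v : R6,
      (fderiv ℝ (Yc H G) m v - Pc H m * fderiv ℝ Xc m v = ω₂ H G m v + m.2.2.2.2.2 * ω₃ H m v)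
      ∧ (fderiv ℝ (Pc H) m v - Qc H m * fderiv ℝ Xc m v = -(1 / 2) * ω₃ H m v)
      ∧ (fderiv ℝ (Qc H) m v - Lc H m * fderiv ℝ Xc m v
          = 1 / 4 * deriv (deriv H) m.2.2.2.2.2 * ω₄ m v)
      ∧ (deriv (deriv H) m.2.2.2.2.2 ≠ 0 →
          fderiv ℝ (Zc H G) m v
              - (4 * Qc H m ^ 2 / deriv (deriv H) m.2.2.2.2.2) * fderiv ℝ Xc m v
            = ϖ m v - m.1 * ω₂ H G m v - m.2.1 * ω₃ H m v) :=
  double_fibration_transform_general I H G hH0 hH1 hH2 hG
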